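/- arXiv:1602.03236 — 7 statements merged into one kernel-verified Lean document; each statement's English description precedes it below -/
import Mathlib

section
/- Let n ≥ 3 and let A ∈ T_n have block form A = [[0, a], [0, A₁]] where A₁ ∈ T_{n-1} is invertible and a is a 1×(n-1) row vector. Then the set of upper triangular matrices C orthogonal to A equals { C : C = [[c₀, -c₀·a·A₁⁻¹], [0, 0]] for some c₀ ∈ F }, i.e., every matrix orthogonal to A is determined by the scalar c₀ in its (1,1) entry, with first row (c₀, -c₀·a·A₁⁻¹) and all other rows zero. -/
/-! Since the first column of `A` vanishes, `A * C` only sees the rows `1, …, n` of `C`, and on them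
it acts through the invertible block `A₁`; so `A * C = 0` says exactly that these rows are zero.
Then `C * A = 0` only constrains the first row `(c₀, c)` of `C`, through `c₀ a + c A₁ = 0`, which
is solved by `c = -c₀ a A₁⁻¹`. -/

open Matrix

namespace Matrix

variable {R : Type*} {m o : Type*} {n : ℕ}

theorem mul_eq_submatrix_succ_mul_of_apply_zero_eq_zero [NonUnitalNonAssocSemiring R]
    {A : Matrix m (Fin (n + 1)) R} (hA : ∀ i, A i 0 = 0) (C : Matrix (Fin (n + 1)) o R) :
    A * C = A.submatrix id Fin.succ * C.submatrix Fin.succ id := by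
  ext i k
  simp [mul_apply, Fin.sum_univ_succ, hA]

theorem vecMul_succ [NonUnitalNonAssocSemiring R] (v : Fin (n + 1) → R)
    (A : Matrix (Fin (n + 1)) (Fin (n + 1)) R) (k : Fin n) :
    (v ᵥ* A) k.succ = v 0 * A 0 k.succ + (Fin.tail v ᵥ* A.submatrix Fin.succ Fin.succ) k := by
  simp [vecMul, dotProduct, Fin.sum_univ_succ, Fin.tail]

theorem vecMul_eq_iff_eq_vecMul_nonsing_inv [CommRing R] [Fintype m] [DecidableEq m]
    {M : Matrix m m R} (hM : IsUnit M.det) (x y : m → R) :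
    x ᵥ* M = y ↔ x = y ᵥ* M⁻¹ := by
  constructor
  · rintro rfl
    rw [vecMul_vecMul, mul_nonsing_inv M hM, vecMul_one]
  · rintro rfl
    rw [vecMul_vecMul, nonsing_inv_mul M hM, vecMul_one]

theorem mul_eq_zero_iff_vecMul_eq_zero_of_forall_succ_apply_eq_zero
    [NonUnitalNonAssocSemiring R] {A : Matrix (Fin (n + 1)) o R}
    {C : Matrix (Fin (n + 1)) (Fin (n + 1)) R} (hC : ∀ (i : Fin n) k, C i.succ k = 0) :
    C * A = 0 ↔ C 0 ᵥ* A = 0 := by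
  refine ⟨fun h => by rw [← mul_apply_eq_vecMul, h]; rfl, fun h => ?_⟩
  ext i k
  induction i using Fin.cases with
  | zero => exact congrFun h k
  | succ i => simp [mul_apply, hC]

variable [CommRing R] {A : Matrix (Fin (n + 1)) (Fin (n + 1)) R}

theorem mul_eq_zero_iff_forall_succ_apply_eq_zero (hA : ∀ i, A i 0 = 0)
    (hA₁ : IsUnit (A.submatrix Fin.succ Fin.succ).det) (C : Matrix (Fin (n + 1)) o R) :
    A * C = 0 ↔ ∀ (i : Fin n) k, C i.succ k = 0 := by
  rw [mul_eq_submatrix_succ_mul_of_apply_zero_eq_zero hA]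
  constructor
  · intro h
    have h₁ : A.submatrix Fin.succ Fin.succ * C.submatrix Fin.succ id = 0 :=
      ext fun i k => congrFun (congrFun h i.succ) k
    have hC : C.submatrix Fin.succ id = 0 := by
      rw [← nonsing_inv_mul_cancel_left _ (C.submatrix Fin.succ id) hA₁, h₁, Matrix.mul_zero]
    exact fun i k => congrFun (congrFun hC i) k
  · intro hC
    have hC' : C.submatrix Fin.succ id = 0 := ext hC
    rw [hC', Matrix.mul_zero]

theorem vecMul_eq_zero_iff_of_apply_zero_eq_zero (hA : ∀ i, A i 0 = 0)
    (hA₁ : IsUnit (A.submatrix Fin.succ Fin.succ).det) (v : Fin (n + 1) → R) :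
    v ᵥ* A = 0 ↔
      Fin.tail v = -v 0 • ((fun j : Fin n => A 0 j.succ) ᵥ* (A.submatrix Fin.succ Fin.succ)⁻¹) := by
  have hcol : (v ᵥ* A) 0 = 0 := by simp [vecMul, dotProduct, hA]
  rw [← smul_vecMul, ← vecMul_eq_iff_eq_vecMul_nonsing_inv hA₁]
  constructor
  · intro h
    funext k
    have := congrFun h k.succ
    rw [vecMul_succ, Pi.zero_apply] at this
    simp only [Pi.smul_apply, smul_eq_mul]
    linear_combination this
  · intro h
    funext k
    induction k using Fin.cases with
    | zero => exact hcol
    | succ k =>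
      rw [vecMul_succ, h]
      simp

end Matrix

theorem stmt_1_general {F : Type*} [Field F] {n : ℕ}
    (A : Matrix (Fin (n + 1)) (Fin (n + 1)) F)
    (hA : A.BlockTriangular id)
    (h00 : A 0 0 = 0)
    (hA1 : IsUnit (A.submatrix Fin.succ Fin.succ).det) :
    ∀ C : Matrix (Fin (n + 1)) (Fin (n + 1)) F, C.BlockTriangular id →
      ((A * C = 0 ∧ C * A = 0) ↔
        ∃ c₀ : F,
          C 0 0 = c₀ ∧
          (∀ j : Fin n, C 0 j.succ =
            -c₀ * ((fun j' : Fin n => A 0 j'.succ) ᵥ*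
                    (A.submatrix Fin.succ Fin.succ)⁻¹) j) ∧
          (∀ i : Fin n, ∀ k : Fin (n + 1), C i.succ k = 0)) := by
  intro C _
  have hcol : ∀ i, A i 0 = 0 := Fin.cases h00 fun i => hA (Fin.succ_pos i)
  rw [mul_eq_zero_iff_forall_succ_apply_eq_zero hcol hA1]
  constructor
  · rintro ⟨hrows, hCA⟩
    rw [mul_eq_zero_iff_vecMul_eq_zero_of_forall_succ_apply_eq_zero hrows,
      vecMul_eq_zero_iff_of_apply_zero_eq_zero hcol hA1] at hCA
    exact ⟨C 0 0, rfl, fun j => congrFun hCA j, hrows⟩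
  · rintro ⟨_, rfl, hrow, hrows⟩
    refine ⟨hrows, ?_⟩
    rw [mul_eq_zero_iff_vecMul_eq_zero_of_forall_succ_apply_eq_zero hrows,
      vecMul_eq_zero_iff_of_apply_zero_eq_zero hcol hA1]
    exact funext hrow

/-- Lemma on bad-1 matrices: if `A` is upper triangular with block form
`[[0, a], [0, A₁]]` (rows/columns split as `1 + n`), `A₁` invertible, then the
upper triangular matrices orthogonal to `A` are exactly those whose only
nonzero row is the first, of the form `(c₀, -c₀ ⬝ a ⬝ A₁⁻¹)`. -/
theorem stmt_1 {F : Type*} [Field F] {n : ℕ} (hn : 3 ≤ n + 1)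
    (A : Matrix (Fin (n + 1)) (Fin (n + 1)) F)
    (hA : A.BlockTriangular id)
    (h00 : A 0 0 = 0)
    (hA1 : IsUnit (A.submatrix Fin.succ Fin.succ).det) :
    ∀ C : Matrix (Fin (n + 1)) (Fin (n + 1)) F, C.BlockTriangular id →
      ((A * C = 0 ∧ C * A = 0) ↔
        ∃ c₀ : F,
          C 0 0 = c₀ ∧
          (∀ j : Fin n, C 0 j.succ =
            -c₀ * ((fun j' : Fin n => A 0 j'.succ) ᵥ*
                    (A.submatrix Fin.succ Fin.succ)⁻¹) j) ∧
          (∀ i : Fin n, ∀ k : Fin (n + 1), C i.succ k = 0)) :=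
  stmt_1_general A hA h00 hA1
end

section
/- Let n ≥ 3 and let B ∈ T_n have block form B = [[B₁, b], [0, 0]] where B₁ ∈ T_{n-1} is invertible and b is an (n-1)×1 column vector. Then the set of upper triangular matrices C orthogonal to B equals { C : C = [[0, -B₁⁻¹·b·c₀], [0, c₀]] for some c₀ ∈ F }, i.e., every matrix orthogonal to B has all entries zero except its last column, which is (-B₁⁻¹ b c₀, c₀) for some scalar c₀. -/
/-!
Since the last row of `B` vanishes, `B *ᵥ x = 0` amounts to `B₁ *ᵥ x' + x_last • b = 0`, so the
kernel of `B` is spanned by `(-B₁⁻¹ *ᵥ b, 1)`. `B * C = 0` says that every column of `C` lies in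
this kernel; triangularity of `C` makes the last entry of each of the first `n` columns vanish, so
those columns are zero. Then `C * B = 0` holds automatically, as `C` only has a last column and `B`
has no last row.
-/

open Matrix

namespace Matrix

theorem mul_eq_zero_iff_forall_mulVec_col {R m n p : Type*} [NonUnitalNonAssocSemiring R]
    [Fintype n] (A : Matrix m n R) (C : Matrix n p R) :
    A * C = 0 ↔ ∀ j, A *ᵥ (fun i => C i j) = 0 := by
  constructor
  · intro h j
    ext i
    exact congrFun (congrFun h i) j
  · intro h
    ext i j
    exact congrFun (h j) i

theorem mul_eq_zero_of_col_castSucc_of_row_last {R : Type*} [NonUnitalNonAssocSemiring R] {n : ℕ}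
    {C B : Matrix (Fin (n + 1)) (Fin (n + 1)) R}
    (hC : ∀ i j, C i (Fin.castSucc j) = 0) (hB : ∀ k, B (Fin.last n) k = 0) : C * B = 0 := by
  ext i j
  simp [mul_apply, Fin.sum_univ_castSucc, hC, hB]

theorem row_last_eq_zero_of_blockTriangular {R : Type*} [Zero R] {n : ℕ}
    {B : Matrix (Fin (n + 1)) (Fin (n + 1)) R} (hB : B.BlockTriangular id)
    (hlast : B (Fin.last n) (Fin.last n) = 0) (k : Fin (n + 1)) : B (Fin.last n) k = 0 := by
  rcases (Fin.le_last k).lt_or_eq with hk | rfl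
  · exact hB hk
  · exact hlast

theorem mulVec_comp_castSucc {R : Type*} [CommSemiring R] {n : ℕ}
    (B : Matrix (Fin (n + 1)) (Fin (n + 1)) R) (x : Fin (n + 1) → R) :
    (B *ᵥ x) ∘ Fin.castSucc = B.submatrix Fin.castSucc Fin.castSucc *ᵥ (x ∘ Fin.castSucc) +
      x (Fin.last n) • fun i => B i.castSucc (Fin.last n) := by
  ext i
  simp [mulVec, dotProduct, Fin.sum_univ_castSucc, mul_comm]

variable {R : Type*} [CommRing R]

theorem mulVec_add_smul_eq_zero_iff {m : Type*} [Fintype m] [DecidableEq m] {A : Matrix m m R}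
    (hA : IsUnit A.det) (w b : m → R) (c : R) :
    A *ᵥ w + c • b = 0 ↔ w = -(c • A⁻¹ *ᵥ b) := by
  rw [add_eq_zero_iff_eq_neg, ← mulVec_smul, ← mulVec_neg]
  constructor
  · intro h
    rw [← h, mulVec_mulVec, nonsing_inv_mul _ hA, one_mulVec]
  · intro h
    rw [h, mulVec_mulVec, mul_nonsing_inv _ hA, one_mulVec]

theorem mulVec_eq_zero_iff_of_row_last_eq_zero {n : ℕ} {B : Matrix (Fin (n + 1)) (Fin (n + 1)) R}
    (hB : ∀ k, B (Fin.last n) k = 0) (hB₁ : IsUnit (B.submatrix Fin.castSucc Fin.castSucc).det)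
    (x : Fin (n + 1) → R) :
    B *ᵥ x = 0 ↔ ∀ i : Fin n, x i.castSucc =
      -((B.submatrix Fin.castSucc Fin.castSucc)⁻¹ *ᵥ fun i' => B i'.castSucc (Fin.last n)) i *
        x (Fin.last n) := by
  have hlast : (B *ᵥ x) (Fin.last n) = 0 := by simp [mulVec, dotProduct, hB]
  have htop := mulVec_add_smul_eq_zero_iff hB₁ (x ∘ Fin.castSucc)
    (fun i => B i.castSucc (Fin.last n)) (x (Fin.last n))
  rw [← mulVec_comp_castSucc] at htop
  rw [funext_iff, Fin.forall_fin_succ']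
  simpa [hlast, funext_iff, mul_comm] using htop

end Matrix

theorem stmt_2_general {F : Type*} [Field F] {n : ℕ}
    (B : Matrix (Fin (n + 1)) (Fin (n + 1)) F)
    (hB : B.BlockTriangular id)
    (hnn : B (Fin.last n) (Fin.last n) = 0)
    (hB1 : IsUnit (B.submatrix Fin.castSucc Fin.castSucc).det) :
    ∀ C : Matrix (Fin (n + 1)) (Fin (n + 1)) F, C.BlockTriangular id →
      ((B * C = 0 ∧ C * B = 0) ↔
        ∃ c₀ : F,
          C (Fin.last n) (Fin.last n) = c₀ ∧
          (∀ i : Fin n, C i.castSucc (Fin.last n) =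
            -((B.submatrix Fin.castSucc Fin.castSucc)⁻¹ *ᵥ
                (fun i' : Fin n => B i'.castSucc (Fin.last n))) i * c₀) ∧
          (∀ i : Fin (n + 1), ∀ j : Fin n, C i j.castSucc = 0)) := by
  intro C hC
  have hBlast := row_last_eq_zero_of_blockTriangular hB hnn
  have hker := mulVec_eq_zero_iff_of_row_last_eq_zero hBlast hB1
  rw [mul_eq_zero_iff_forall_mulVec_col]
  constructor
  · rintro ⟨hBC, -⟩
    refine ⟨_, rfl, (hker _).mp (hBC _), fun i j => ?_⟩
    have hCj : C (Fin.last n) j.castSucc = 0 := hC (Fin.castSucc_lt_last j)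
    have htop := (hker _).mp (hBC j.castSucc)
    induction i using Fin.lastCases with
    | last => exact hCj
    | cast i => simpa [hCj] using htop i
  · rintro ⟨c₀, rfl, hlastcol, hcols⟩
    refine ⟨fun j => (hker _).mpr ?_, mul_eq_zero_of_col_castSucc_of_row_last hcols hBlast⟩
    induction j using Fin.lastCases with
    | last => exact hlastcol
    | cast j => simp [hcols]

/-- Lemma on bad-2 matrices: if `B` is upper triangular with block form
`[[B₁, b], [0, 0]]` (rows/columns split as `n + 1`), `B₁` invertible, then the
upper triangular matrices orthogonal to `B` are exactly those whose only
nonzero column is the last, of the form `(-B₁⁻¹ ⬝ b ⬝ c₀, c₀)`. -/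
theorem stmt_2 {F : Type*} [Field F] {n : ℕ} (hn : 3 ≤ n + 1)
    (B : Matrix (Fin (n + 1)) (Fin (n + 1)) F)
    (hB : B.BlockTriangular id)
    (hnn : B (Fin.last n) (Fin.last n) = 0)
    (hB1 : IsUnit (B.submatrix Fin.castSucc Fin.castSucc).det) :
    ∀ C : Matrix (Fin (n + 1)) (Fin (n + 1)) F, C.BlockTriangular id →
      ((B * C = 0 ∧ C * B = 0) ↔
        ∃ c₀ : F,
          C (Fin.last n) (Fin.last n) = c₀ ∧
          (∀ i : Fin n, C i.castSucc (Fin.last n) =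
            -((B.submatrix Fin.castSucc Fin.castSucc)⁻¹ *ᵥ
                (fun i' : Fin n => B i'.castSucc (Fin.last n))) i * c₀) ∧
          (∀ i : Fin (n + 1), ∀ j : Fin n, C i j.castSucc = 0)) :=
  stmt_2_general B hB hnn hB1
end

section
/- Let A ∈ T_n be a nonzero singular upper triangular matrix over a field F with a zero diagonal entry at position (i,i). Then there exists a rank-one upper triangular matrix R ∈ T_n with AR = RA = 0 (in particular, A and R are at distance at most 1 in the orthogonality graph). Moreover R can be chosen of the form R = x·fᵗ where x ∈ F^n is supported on the first i coordinates with A x = 0, and f ∈ F^n is supported on coordinates i through n with Aᵗ f = 0. -/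
/-!
Since `A` is upper triangular with `A i i = 0`, it maps the `(i+1)`-dimensional space of vectors
supported on `{0, …, i}` into the `i`-dimensional space of vectors supported on `{0, …, i-1}`,
so it kills a nonzero `x` of the first kind. Symmetrically `Aᵀ` maps the vectors supported on
`{i, …, n-1}` into those supported on `{i+1, …, n-1}` and kills a nonzero `f` of the first kind.
Then `R = x fᵗ` has rank one, `A R = (A x) fᵗ = 0`, `R A = x (Aᵀ f)ᵗ = 0`, and `R` is upper
triangular because `x` lives above and `f` to the right of position `i`.
-/

open Matrix Finset

namespace Matrix

variable {K : Type*} [Field K] {m n : Type*} [Fintype n]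

theorem rank_pos_of_ne_zero {M : Matrix m n K} (hM : M ≠ 0) : 0 < M.rank := by
  classical
  rwa [Matrix.rank, Nat.pos_iff_ne_zero, Ne, Submodule.finrank_eq_zero, LinearMap.range_eq_bot,
    ← Matrix.toLin'_apply', LinearEquiv.map_eq_zero_iff]

theorem rank_vecMulVec_eq_one {x : m → K} {y : n → K} (hx : x ≠ 0) (hy : y ≠ 0) :
    (vecMulVec x y).rank = 1 := by
  refine le_antisymm (rank_vecMulVec_le x y) (rank_pos_of_ne_zero fun h => ?_)
  obtain ⟨i, hi⟩ := Function.ne_iff.mp hx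
  obtain ⟨j, hj⟩ := Function.ne_iff.mp hy
  exact mul_ne_zero hi hj congr($h i j)

theorem exists_ne_zero_mulVec_eq_zero_of_card_lt [Fintype m] {M : Matrix m n K}
    (s : Finset n) (t : Finset m) (hM : ∀ j ∉ t, ∀ k ∈ s, M j k = 0) (hst : #t < #s) :
    ∃ x : n → K, x ≠ 0 ∧ (∀ k ∉ s, x k = 0) ∧ M *ᵥ x = 0 := by
  let L : (s → K) →ₗ[K] (t → K) := LinearMap.funLeft K K Subtype.val ∘ₗ M.mulVecLin ∘ₗ
    Function.ExtendByZero.linearMap K (Subtype.val : s → n)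
  have hker : LinearMap.ker L ≠ ⊥ :=
    LinearMap.ker_ne_bot_of_finrank_lt (by simpa [Module.finrank_fintype_fun_eq_card] using hst)
  obtain ⟨v, hv, hv0⟩ := (Submodule.ne_bot_iff _).mp hker
  set x := Function.extend (Subtype.val : s → n) v 0
  have hx_on : ∀ a : s, x a = v a := Subtype.val_injective.extend_apply v 0
  have hx_off : ∀ k ∉ s, x k = 0 := fun k hk =>
    Function.extend_apply' _ _ _ fun ⟨a, ha⟩ => hk (ha ▸ a.2)
  refine ⟨x, fun h => hv0 (funext fun a => by simpa [h] using (hx_on a).symm), hx_off, ?_⟩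
  funext j
  by_cases hj : j ∈ t
  · exact congrFun hv ⟨j, hj⟩
  · refine Finset.sum_eq_zero fun k _ => ?_
    by_cases hk : k ∈ s
    · simp [hM j hj k hk]
    · simp [hx_off k hk]

section LinearOrder

variable {R ι : Type*} [LinearOrder ι]

theorem BlockTriangular.apply_eq_zero_of_le_of_le [Zero R] {A : Matrix ι ι R}
    (hA : A.BlockTriangular id) {i j k : ι} (hii : A i i = 0) (hki : k ≤ i) (hij : i ≤ j) :
    A j k = 0 := by
  rcases (hki.trans hij).lt_or_eq with hkj | rfl
  · exact hA hkj
  · rwa [le_antisymm hki hij]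

theorem blockTriangular_vecMulVec [MulZeroClass R] {x f : ι → R} (i : ι)
    (hx : ∀ j, i < j → x j = 0) (hf : ∀ j, j < i → f j = 0) :
    (vecMulVec x f).BlockTriangular id := by
  intro a b hba
  rw [vecMulVec_apply]
  rcases lt_or_ge i a with hia | hai
  · rw [hx a hia, zero_mul]
  · rw [hf b (hba.trans_le hai), mul_zero]

end LinearOrder

end Matrix

theorem stmt_4_general {F : Type*} [Field F] {n : ℕ}
    (A : Matrix (Fin n) (Fin n) F)
    (hA : A.BlockTriangular id)
    (i : Fin n) (hii : A i i = 0) :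
    ∃ x f : Fin n → F, x ≠ 0 ∧ f ≠ 0 ∧
      (∀ j : Fin n, i < j → x j = 0) ∧
      (∀ j : Fin n, j < i → f j = 0) ∧
      A *ᵥ x = 0 ∧ Aᵀ *ᵥ f = 0 ∧
      (vecMulVec x f).BlockTriangular id ∧
      (vecMulVec x f).rank = 1 ∧
      A * vecMulVec x f = 0 ∧ vecMulVec x f * A = 0 := by
  obtain ⟨x, hx0, hx_supp, hAx⟩ := exists_ne_zero_mulVec_eq_zero_of_card_lt (M := A)
    (Iic i) (Iio i)
    (fun j hj k hk => hA.apply_eq_zero_of_le_of_le hii (mem_Iic.mp hk) (by simpa using hj))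
    (by simp)
  obtain ⟨f, hf0, hf_supp, hAf⟩ := exists_ne_zero_mulVec_eq_zero_of_card_lt (M := Aᵀ)
    (Ici i) (Ioi i)
    (fun j hj k hk => hA.apply_eq_zero_of_le_of_le hii (by simpa using hj) (mem_Ici.mp hk))
    (by simp only [Fin.card_Ioi, Fin.card_Ici]; omega)
  have hx_supp' : ∀ j, i < j → x j = 0 := fun j hj => hx_supp j (by simpa using hj)
  have hf_supp' : ∀ j, j < i → f j = 0 := fun j hj => hf_supp j (by simpa using hj)
  refine ⟨x, f, hx0, hf0, hx_supp', hf_supp', hAx, hAf,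
    blockTriangular_vecMulVec i hx_supp' hf_supp', rank_vecMulVec_eq_one hx0 hf0, ?_, ?_⟩
  · rw [mul_vecMulVec, hAx, zero_vecMulVec]
  · rw [vecMulVec_mul, ← mulVec_transpose, hAf, vecMulVec_zero]

/-- For a nonzero singular upper triangular matrix `A` with zero `(i,i)` diagonal
entry there is a rank-one upper triangular matrix `R = x ⬝ fᵗ` orthogonal to `A`,
with `x` supported on the coordinates `≤ i` and `f` supported on coordinates `≥ i`. -/
theorem stmt_4 {F : Type*} [Field F] {n : ℕ}
    (A : Matrix (Fin n) (Fin n) F)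
    (hA : A.BlockTriangular id) (hA0 : A ≠ 0) (hsing : A.det = 0)
    (i : Fin n) (hii : A i i = 0) :
    ∃ x f : Fin n → F, x ≠ 0 ∧ f ≠ 0 ∧
      (∀ j : Fin n, i < j → x j = 0) ∧
      (∀ j : Fin n, j < i → f j = 0) ∧
      A *ᵥ x = 0 ∧ Aᵀ *ᵥ f = 0 ∧
      (vecMulVec x f).BlockTriangular id ∧
      (vecMulVec x f).rank = 1 ∧
      A * vecMulVec x f = 0 ∧ vecMulVec x f * A = 0 :=
  stmt_4_general A hA i hii
end

section
/- Let A ∈ T_n be a nonzero singular upper triangular matrix over a field F with a zero diagonal entry at position (i,i) where 2 ≤ i ≤ n-1. Then there exists a nonzero matrix R ∈ T_n orthogonal to A whose first column and last row are both zero; consequently R is also orthogonal to the matrix unit E_{1n}. -/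
/-!
Since `A` is upper triangular with `A i i = 0`, both its leading principal block on the indices
`≤ i` and its trailing principal block on the indices `≥ i` are singular. This yields a nonzero
column vector `x` supported on `{k ≤ i}` with `A x = 0` and a nonzero row vector `y` supported on
`{k ≥ i}` with `y A = 0`. The rank-one matrix `R = x y` then works: it is upper triangular
because of the supports, `A R = R A = 0`, and its first column and last row vanish because
`1 ≤ i ≤ n - 2`.
-/

open Matrix

namespace Matrix

variable {ι R : Type*} [LinearOrder ι]

theorem IsUpperTriangular.exists_mulVec_eq_zero_of_diag_eq_zero [Fintype ι] [CommRing R]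
    [IsDomain R] {A : Matrix ι ι R} (hA : A.IsUpperTriangular) {i : ι} (hi : A i i = 0) :
    ∃ x ≠ 0, A *ᵥ x = 0 ∧ ∀ k, i < k → x k = 0 := by
  classical
  let B : Matrix {k // k ≤ i} {k // k ≤ i} R := A.submatrix Subtype.val Subtype.val
  have hB : B.det = 0 := by
    rw [det_of_isUpperTriangular (M := B) fun _ _ h => hA h]
    exact Finset.prod_eq_zero (Finset.mem_univ (⟨i, le_rfl⟩ : {k // k ≤ i})) hi
  obtain ⟨x', hx'0, hBx'⟩ := exists_mulVec_eq_zero_iff.2 hB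
  let x : ι → R := fun k => if h : k ≤ i then x' ⟨k, h⟩ else 0
  have hAx : ∀ k, (A *ᵥ x) k = ∑ j : {j // j ≤ i}, A k j * x' j := fun k => by
    have hsupp : ∀ j ∈ Finset.univ, A k j * x j ≠ 0 → j ≤ i := fun j _ h => by
      by_contra hj
      simp [x, hj] at h
    rw [mulVec, dotProduct, ← Finset.sum_filter_of_ne hsupp,
      Finset.sum_subtype (p := (· ≤ i)) _ fun j => by simp]
    exact Finset.sum_congr rfl fun j _ => by simp [x, j.2]
  refine ⟨x, ?_, ?_, fun k hk => dif_neg hk.not_ge⟩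
  · obtain ⟨j, hj⟩ := Function.ne_iff.1 hx'0
    exact Function.ne_iff.2 ⟨j, by simpa [x, j.2] using hj⟩
  · ext k
    rw [hAx]
    by_cases hk : k ≤ i
    · exact congrFun hBx' ⟨k, hk⟩
    · exact Finset.sum_eq_zero fun j _ => by
        rw [hA (j.2.trans_lt (not_le.1 hk)), zero_mul]

theorem IsUpperTriangular.exists_vecMul_eq_zero_of_diag_eq_zero [Fintype ι] [CommRing R]
    [IsDomain R] {A : Matrix ι ι R} (hA : A.IsUpperTriangular) {i : ι} (hi : A i i = 0) :
    ∃ y ≠ 0, y ᵥ* A = 0 ∧ ∀ k, k < i → y k = 0 := by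
  -- `Aᵀ`, read over the reversed order `ιᵒᵈ`, is again upper triangular.
  obtain ⟨y, hy0, hAy, hy⟩ :=
    IsUpperTriangular.exists_mulVec_eq_zero_of_diag_eq_zero
      (A := (Aᵀ : Matrix ιᵒᵈ ιᵒᵈ R)) (fun _ _ h => hA h) hi
  exact ⟨y, hy0, (mulVec_transpose A y).symm.trans hAy, hy⟩

theorem isUpperTriangular_vecMulVec [MulZeroClass R] {x y : ι → R} {i : ι}
    (hx : ∀ k, i < k → x k = 0) (hy : ∀ k, k < i → y k = 0) :
    (vecMulVec x y).IsUpperTriangular := fun a b hba => by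
  rcases lt_or_ge i a with h | h
  · rw [vecMulVec_apply, hx a h, zero_mul]
  · rw [vecMulVec_apply, hy b (hba.trans_le h), mul_zero]

theorem mul_single_eq_zero {l m n : Type*} [Fintype m] [DecidableEq m] [DecidableEq n]
    [NonUnitalNonAssocSemiring R] {M : Matrix l m R} {i : m} (hM : ∀ k, M k i = 0) (j : n)
    (c : R) : M * single i j c = 0 := by
  ext a b
  by_cases hb : b = j
  · rw [hb, mul_single_apply_same, hM, zero_mul, zero_apply]
  · rw [mul_single_apply_of_ne _ _ _ _ _ hb, zero_apply]

theorem single_mul_eq_zero {l m n : Type*} [Fintype m] [DecidableEq l] [DecidableEq m]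
    [NonUnitalNonAssocSemiring R] {M : Matrix m n R} {j : m} (hM : ∀ k, M j k = 0) (i : l)
    (c : R) : single i j c * M = 0 := by
  ext a b
  by_cases ha : a = i
  · rw [ha, single_mul_apply_same, hM, mul_zero, zero_apply]
  · rw [single_mul_apply_of_ne _ _ _ _ _ ha, zero_apply]

end Matrix

/-- If a nonzero singular upper triangular matrix `A` (with `n ≥ 3`) has a zero
diagonal entry at some position `(i,i)` with `2 ≤ i ≤ n-1` (in 1-based indexing,
i.e. `1 ≤ i ≤ n-2` for `Fin n`), then there is a nonzero matrix `R` orthogonal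
to `A` whose first column and last row vanish; consequently `R` is orthogonal to
the matrix unit `E₁ₙ`. -/
theorem stmt_5 {F : Type*} [Field F] {n : ℕ}
    (A : Matrix (Fin n) (Fin n) F)
    (hA : A.BlockTriangular id)
    (i : Fin n) (hii : A i i = 0) (hi1 : 1 ≤ (i : ℕ)) (hi2 : (i : ℕ) ≤ n - 2) :
    ∃ R : Matrix (Fin n) (Fin n) F, R ≠ 0 ∧ R.BlockTriangular id ∧
      A * R = 0 ∧ R * A = 0 ∧
      (∀ k : Fin n, R k ⟨0, by omega⟩ = 0) ∧
      (∀ k : Fin n, R ⟨n - 1, by omega⟩ k = 0) ∧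
      R * single (⟨0, by omega⟩ : Fin n) (⟨n - 1, by omega⟩ : Fin n) (1 : F) = 0 ∧
      single (⟨0, by omega⟩ : Fin n) (⟨n - 1, by omega⟩ : Fin n) (1 : F) * R = 0 := by
  obtain ⟨x, hx0, hAx, hx⟩ := IsUpperTriangular.exists_mulVec_eq_zero_of_diag_eq_zero hA hii
  obtain ⟨y, hy0, hyA, hy⟩ := IsUpperTriangular.exists_vecMul_eq_zero_of_diag_eq_zero hA hii
  have hcol : ∀ k, vecMulVec x y k ⟨0, by omega⟩ = 0 := fun k => by
    rw [vecMulVec_apply, hy _ (Fin.lt_def.2 (by dsimp only; omega)), mul_zero]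
  have hrow : ∀ k, vecMulVec x y ⟨n - 1, by omega⟩ k = 0 := fun k => by
    rw [vecMulVec_apply, hx _ (Fin.lt_def.2 (by dsimp only; omega)), zero_mul]
  refine ⟨vecMulVec x y, vecMulVec_ne_zero hx0 hy0, isUpperTriangular_vecMulVec hx hy, ?_, ?_,
    hcol, hrow, mul_single_eq_zero hcol _ _, single_mul_eq_zero hrow _ _⟩
  · rw [mul_vecMulVec, hAx, zero_vecMulVec]
  · rw [vecMulVec_mul, hyA, vecMulVec_zero]
end

section
/- For n ≥ 3, the orthogonality graph O(T_n) of the algebra of n×n upper triangular matrices over any field F is connected. -/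
/-!
A vertex `A` has a zero diagonal entry `A k k`. Then the leading principal block of `A` ending at
`k` is singular, and so is the trailing one starting at `k`; this gives a right kernel vector `u`
supported on `{i ≤ k}` and a left kernel vector `z` supported on `{j ≥ k}`, so that `u zᵀ` is
upper triangular and orthogonal to `A`. Any rank-one `u zᵀ` is in turn orthogonal to some
`u' z'ᵀ` with `u'` supported on `{0, 1}` and `z'` on `{1, 2}`, which is orthogonal to the matrix
unit `E₀₂`. Every vertex is thus joined to `E₀₂` by a path of length at most three; the new
matrices are singular for free, since each annihilates a nonzero matrix.
-/

open Matrix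

/-- The orthogonality graph of the algebra of upper triangular `n × n` matrices
over `F`: vertices are the nonzero singular (equivalently, two-sided zero
divisor) upper triangular matrices, with an edge between distinct `A`, `B` iff
`A * B = B * A = 0`. -/
def orthoGraph (F : Type*) [Field F] (n : ℕ) :
    SimpleGraph {A : Matrix (Fin n) (Fin n) F // A.BlockTriangular id ∧ A ≠ 0 ∧ A.det = 0} where
  Adj X Y := X ≠ Y ∧ X.1 * Y.1 = 0 ∧ Y.1 * X.1 = 0
  symm := ⟨fun X Y h => ⟨h.1.symm, h.2.2, h.2.1⟩⟩
  loopless := ⟨fun X h => h.1 rfl⟩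

def AreOrthogonal {R : Type*} [Mul R] [Zero R] (a b : R) : Prop :=
  a * b = 0 ∧ b * a = 0

namespace Matrix

variable {ι F : Type*} [Field F]

theorem det_eq_zero_of_mul_eq_zero [Fintype ι] [DecidableEq ι] {M N : Matrix ι ι F}
    (h : M * N = 0) (hN : N ≠ 0) : M.det = 0 := by
  by_contra hM
  exact hN (((isUnit_iff_isUnit_det M).2 (isUnit_iff_ne_zero.2 hM)).mul_right_eq_zero.1 h)

theorem vecMulVec_mul_vecMulVec_eq_zero {R κ μ : Type*} [CommSemiring R] [Fintype κ]
    (u : ι → R) {v w : κ → R} (x : μ → R) (h : v ⬝ᵥ w = 0) :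
    vecMulVec u v * vecMulVec w x = 0 := by
  rw [vecMulVec_mul_vecMulVec, h, zero_smul]
  exact ext fun _ _ => mul_zero _

theorem areOrthogonal_vecMulVec {R : Type*} [CommSemiring R] [Fintype ι] {u v w x : ι → R}
    (hvw : v ⬝ᵥ w = 0) (hxu : x ⬝ᵥ u = 0) : AreOrthogonal (vecMulVec u v) (vecMulVec w x) :=
  ⟨vecMulVec_mul_vecMulVec_eq_zero u x hvw, vecMulVec_mul_vecMulVec_eq_zero w v hxu⟩

theorem exists_ne_zero_dotProduct_eq_zero [Fintype ι] [DecidableEq ι] (w : ι → F) {p q : ι}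
    (hpq : p ≠ q) : ∃ s ≠ 0, (∀ i, i ≠ p → i ≠ q → s i = 0) ∧ s ⬝ᵥ w = 0 := by
  by_cases hp : w p = 0
  · refine ⟨Pi.single p 1, by simp, fun i hip _ => Pi.single_eq_of_ne hip _, ?_⟩
    rw [single_dotProduct, hp, mul_zero]
  · refine ⟨Pi.single p (w q) - Pi.single q (w p), Function.ne_iff.2 ⟨q, ?_⟩,
      fun i hip hiq => by simp [hip, hiq], ?_⟩
    · simpa [hpq.symm] using hp
    · rw [sub_dotProduct, single_dotProduct, single_dotProduct, mul_comm, sub_self]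

section LinearOrder

variable [LinearOrder ι]

theorem isUpperTriangular_vecMulVec_s8 {R : Type*} [MulZeroClass R] {u z : ι → R} {k : ι}
    (hu : ∀ i, k < i → u i = 0) (hz : ∀ j, j < k → z j = 0) :
    (vecMulVec u z).IsUpperTriangular := by
  intro i j hji
  rw [vecMulVec_apply]
  rcases lt_or_ge k i with hki | hik
  · rw [hu i hki, zero_mul]
  · rw [hz j (hji.trans_le hik), mul_zero]

variable [Fintype ι] {A : Matrix ι ι F}

theorem IsUpperTriangular.exists_mulVec_eq_zero (hA : A.IsUpperTriangular) {k : ι}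
    (hk : A k k = 0) : ∃ u ≠ 0, (∀ i, k < i → u i = 0) ∧ A *ᵥ u = 0 := by
  -- extend by zero a kernel vector of the leading block `{i ≤ k}`, singular since `M k k = 0`
  let M : Matrix {i // i ≤ k} {i // i ≤ k} F := A.submatrix (↑) (↑)
  have hM : M.IsUpperTriangular := hA.submatrix
  obtain ⟨v, hv0, hv⟩ := exists_mulVec_eq_zero_iff.2 <|
    (det_of_isUpperTriangular hM).trans
      (Finset.prod_eq_zero (i := ⟨k, le_rfl⟩) (Finset.mem_univ _) hk)
  let u : ι → F := fun i => if h : i ≤ k then v ⟨i, h⟩ else 0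
  have hAu : ∀ i, (A *ᵥ u) i = ∑ j : {j // j ≤ k}, A i j * v j := by
    intro i
    have hout : ∑ j : {j // ¬ j ≤ k}, A i j * u j = 0 :=
      Finset.sum_eq_zero fun j _ => by simp [u, j.2]
    rw [mulVec, dotProduct, ← Fintype.sum_subtype_add_sum_subtype (· ≤ k), hout, add_zero]
    exact Finset.sum_congr rfl fun j _ => by simp [u, j.2]
  refine ⟨u, ?_, fun i hi => dif_neg hi.not_ge, funext fun i => ?_⟩
  · obtain ⟨j, hj⟩ := Function.ne_iff.1 hv0
    exact Function.ne_iff.2 ⟨j, by simpa [u, j.2] using hj⟩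
  · rw [hAu]
    rcases le_or_gt i k with hik | hki
    · exact congrFun hv ⟨i, hik⟩
    · exact Finset.sum_eq_zero fun j _ => by rw [hA (j.2.trans_lt hki), zero_mul]

theorem IsUpperTriangular.exists_vecMul_eq_zero (hA : A.IsUpperTriangular) {k : ι}
    (hk : A k k = 0) : ∃ z ≠ 0, (∀ j, j < k → z j = 0) ∧ z ᵥ* A = 0 := by
  obtain ⟨z, hz0, hzk, hz⟩ :=
    IsUpperTriangular.exists_mulVec_eq_zero (ι := ιᵒᵈ) (A := Aᵀ) hA.transpose hk
  exact ⟨z, hz0, hzk, (mulVec_transpose A z).symm.trans hz⟩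

theorem IsUpperTriangular.exists_vecMulVec_areOrthogonal (hA : A.IsUpperTriangular)
    (hdet : A.det = 0) : ∃ u z : ι → F, vecMulVec u z ≠ 0 ∧
      (vecMulVec u z).IsUpperTriangular ∧ AreOrthogonal A (vecMulVec u z) := by
  obtain ⟨k, -, hk⟩ := Finset.prod_eq_zero_iff.1 ((det_of_isUpperTriangular hA).symm.trans hdet)
  obtain ⟨u, hu0, huk, hu⟩ := hA.exists_mulVec_eq_zero hk
  obtain ⟨z, hz0, hzk, hz⟩ := hA.exists_vecMul_eq_zero hk
  exact ⟨u, z, vecMulVec_ne_zero hu0 hz0, isUpperTriangular_vecMulVec_s8 huk hzk,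
    by rw [mul_vecMulVec, hu, zero_vecMulVec], by rw [vecMulVec_mul, hz, vecMulVec_zero]⟩

theorem exists_vecMulVec_areOrthogonal_vecMulVec_single (u z : ι → F) {a b c : ι}
    (hab : a < b) (hbc : b < c) : ∃ u' z' : ι → F, vecMulVec u' z' ≠ 0 ∧
      (vecMulVec u' z').IsUpperTriangular ∧ AreOrthogonal (vecMulVec u z) (vecMulVec u' z') ∧
      AreOrthogonal (vecMulVec u' z') (vecMulVec (Pi.single a 1) (Pi.single c 1)) := by
  obtain ⟨u', hu'0, hu'ab, hu'z⟩ := exists_ne_zero_dotProduct_eq_zero z hab.ne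
  obtain ⟨z', hz'0, hz'bc, hz'u⟩ := exists_ne_zero_dotProduct_eq_zero u hbc.ne
  refine ⟨u', z', vecMulVec_ne_zero hu'0 hz'0,
    isUpperTriangular_vecMulVec_s8 (k := b) (fun i hi => hu'ab i (hab.trans hi).ne' hi.ne')
      (fun j hj => hz'bc j hj.ne (hj.trans hbc).ne),
    areOrthogonal_vecMulVec (by rwa [dotProduct_comm]) hz'u, areOrthogonal_vecMulVec ?_ ?_⟩
  · rw [dotProduct_single, hz'bc a hab.ne (hab.trans hbc).ne, zero_mul]
  · rw [single_dotProduct, hu'ab c (hab.trans hbc).ne' hbc.ne', mul_zero]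

end LinearOrder

end Matrix

abbrev OrthoVertex (F : Type*) [Field F] (n : ℕ) :=
  {A : Matrix (Fin n) (Fin n) F // A.BlockTriangular id ∧ A ≠ 0 ∧ A.det = 0}

section orthoGraph

variable {F : Type*} [Field F] {n : ℕ}

theorem orthoGraph_reachable_of_areOrthogonal (X : OrthoVertex F n)
    {M : Matrix (Fin n) (Fin n) F} (hM : M.IsUpperTriangular) (hM0 : M ≠ 0)
    (h : AreOrthogonal X.1 M) :
    (orthoGraph F n).Reachable X ⟨M, hM, hM0, det_eq_zero_of_mul_eq_zero h.2 X.2.2.1⟩ := by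
  rcases eq_or_ne X ⟨M, hM, hM0, det_eq_zero_of_mul_eq_zero h.2 X.2.2.1⟩ with hXM | hXM
  · exact hXM ▸ SimpleGraph.Reachable.refl X
  · exact SimpleGraph.Adj.reachable ⟨hXM, h⟩

variable (F) in
def matrixUnitVertex {a c : Fin n} (hac : a < c) : OrthoVertex F n :=
  have hE0 : vecMulVec (Pi.single a (1 : F)) (Pi.single c 1) ≠ 0 :=
    vecMulVec_ne_zero (by simp) (by simp)
  ⟨vecMulVec (Pi.single a 1) (Pi.single c 1),
    isUpperTriangular_vecMulVec_s8 (k := a) (fun i hi => Pi.single_eq_of_ne hi.ne' _)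
      (fun j hj => Pi.single_eq_of_ne (hj.trans hac).ne _), hE0,
    det_eq_zero_of_mul_eq_zero (vecMulVec_mul_vecMulVec_eq_zero _ _ (by simp [hac.ne'])) hE0⟩

theorem orthoGraph_reachable_matrixUnitVertex {a b c : Fin n} (hab : a < b) (hbc : b < c)
    (X : OrthoVertex F n) : (orthoGraph F n).Reachable X (matrixUnitVertex F (hab.trans hbc)) := by
  obtain ⟨u, z, hX₁0, hX₁, hXX₁⟩ :=
    IsUpperTriangular.exists_vecMulVec_areOrthogonal X.2.1 X.2.2.2
  obtain ⟨u', z', hY0, hY, hX₁Y, hYE⟩ :=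
    exists_vecMulVec_areOrthogonal_vecMulVec_single u z hab hbc
  have hE := (matrixUnitVertex F (hab.trans hbc)).2
  exact ((orthoGraph_reachable_of_areOrthogonal X hX₁ hX₁0 hXX₁).trans
    (orthoGraph_reachable_of_areOrthogonal _ hY hY0 hX₁Y)).trans
    (orthoGraph_reachable_of_areOrthogonal _ hE.1 hE.2.1 hYE)

end orthoGraph

/-- For `n ≥ 3` the orthogonality graph `O(Tₙ)` is connected. -/
theorem stmt_8 {F : Type*} [Field F] {n : ℕ} (hn : 3 ≤ n) :
    (orthoGraph F n).Connected := by
  have hab : (⟨0, by omega⟩ : Fin n) < ⟨1, by omega⟩ := Fin.mk_lt_mk.2 zero_lt_one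
  have hbc : (⟨1, by omega⟩ : Fin n) < ⟨2, by omega⟩ := Fin.mk_lt_mk.2 one_lt_two
  have reach := orthoGraph_reachable_matrixUnitVertex (F := F) hab hbc
  exact (SimpleGraph.connected_iff _).2 ⟨fun X Y => (reach X).trans (reach Y).symm,
    ⟨matrixUnitVertex F (hab.trans hbc)⟩⟩
end

section
/- Let n ≥ 3, Â = I_n - E_{11} (the diagonal matrix with 0 in position (1,1) and 1 elsewhere) and B̂ = J_n (the n×n nilpotent Jordan block with eigenvalue 0). Then the set of upper triangular matrices orthogonal to Â is exactly { α E_{11} : α ∈ F }, and the set of upper triangular matrices orthogonal to B̂ is exactly { α E_{1n} : α ∈ F }. -/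
/-!
Left multiplication by `1 - E₁₁` keeps the rows of `C` other than the first, and right
multiplication keeps the other columns; likewise `J * C` shifts the rows of `C` up by one and
`C * J` shifts its columns right by one, so the first product loses only row 1 and the second
only column `n`. Hence both products vanish exactly when `C` is supported on the single entry
`(1, 1)`, respectively `(1, n)`.
-/

open Matrix

namespace Matrix

variable {R m n : Type*}

theorem exists_eq_smul_single_one_iff [Semiring R] [DecidableEq m] [DecidableEq n]
    (C : Matrix m n R) (i : m) (j : n) :
    (∃ α : R, C = α • single i j 1) ↔
      (∀ k ≠ i, ∀ l, C k l = 0) ∧ ∀ k, ∀ l ≠ j, C k l = 0 := by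
  constructor
  · rintro ⟨α, rfl⟩
    exact ⟨fun k hk l => by simp [single_apply_of_row_ne hk.symm],
      fun k l hl => by simp [single_apply_of_col_ne _ _ hl.symm]⟩
  · rintro ⟨hrow, hcol⟩
    refine ⟨C i j, ?_⟩
    ext k l
    by_cases hk : k = i
    · by_cases hl : l = j
      · subst hk hl
        simp
      · simp [hcol k l hl, single_apply_of_col_ne _ _ (Ne.symm hl)]
    · simp [hrow k hk l, single_apply_of_row_ne (Ne.symm hk)]

section Idempotent

variable [Ring R] [Fintype m] [DecidableEq m]

theorem one_sub_single_mul_eq_zero_iff (i : m) (C : Matrix m n R) :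
    (1 - single i i (1 : R)) * C = 0 ↔ ∀ k ≠ i, ∀ l, C k l = 0 := by
  rw [Matrix.sub_mul, Matrix.one_mul, sub_eq_zero]
  constructor
  · intro h k hk l
    rw [h, single_mul_apply_of_ne _ _ _ _ _ hk]
  · intro h
    ext k l
    by_cases hk : k = i
    · subst hk
      simp
    · rw [h k hk l, single_mul_apply_of_ne _ _ _ _ _ hk]

theorem mul_one_sub_single_eq_zero_iff (i : m) (C : Matrix n m R) :
    C * (1 - single i i (1 : R)) = 0 ↔ ∀ k, ∀ l ≠ i, C k l = 0 := by
  rw [Matrix.mul_sub, Matrix.mul_one, sub_eq_zero]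
  constructor
  · intro h k l hl
    rw [h, mul_single_apply_of_ne _ _ _ _ _ hl]
  · intro h
    ext k l
    by_cases hl : l = i
    · subst hl
      simp
    · rw [h k l hl, mul_single_apply_of_ne _ _ _ _ _ hl]

end Idempotent

section JordanBlock

variable [Semiring R] {d : ℕ}

variable (R) in
def nilpotentJordanBlock (d : ℕ) : Matrix (Fin d) (Fin d) R :=
  of fun i j => if (i : ℕ) + 1 = j then 1 else 0

theorem nilpotentJordanBlock_mul_apply [Fintype n] (C : Matrix (Fin d) n R) (i : Fin d) (l : n) :
    (nilpotentJordanBlock R d * C) i l = if h : (i : ℕ) + 1 < d then C ⟨i + 1, h⟩ l else 0 := by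
  simp only [mul_apply, nilpotentJordanBlock, of_apply, ite_mul, one_mul, zero_mul]
  split_ifs with h
  · rw [Finset.sum_eq_single ⟨i + 1, h⟩]
    · simp
    · intro k _ hk
      rw [if_neg fun hik => hk (Fin.ext hik.symm)]
    · simp
  · refine Finset.sum_eq_zero fun k _ => if_neg ?_
    omega

theorem mul_nilpotentJordanBlock_apply [Fintype n] (C : Matrix n (Fin d) R) (k : n) (j : Fin d) :
    (C * nilpotentJordanBlock R d) k j = if h : 0 < (j : ℕ) then C k ⟨j - 1, by omega⟩ else 0 := by
  simp only [mul_apply, nilpotentJordanBlock, of_apply, mul_ite, mul_one, mul_zero]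
  split_ifs with h
  · rw [Finset.sum_eq_single ⟨j - 1, by omega⟩]
    · simp only [ite_eq_left_iff]
      omega
    · intro l _ hl
      rw [if_neg fun hlj => hl (Fin.ext (by simp only; omega))]
    · simp
  · refine Finset.sum_eq_zero fun l _ => if_neg ?_
    omega

theorem nilpotentJordanBlock_mul_eq_zero_iff [Fintype n] (hd : 0 < d) (C : Matrix (Fin d) n R) :
    nilpotentJordanBlock R d * C = 0 ↔ ∀ k ≠ (⟨0, hd⟩ : Fin d), ∀ l, C k l = 0 := by
  constructor
  · intro hC k hk l
    have hk0 : 0 < (k : ℕ) := Nat.pos_of_ne_zero fun h0 => hk (Fin.ext h0)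
    have hentry := congr_fun₂ hC ⟨k - 1, by omega⟩ l
    rw [nilpotentJordanBlock_mul_apply, dif_pos (by simp only; omega), zero_apply] at hentry
    convert hentry using 2
    ext
    simp only
    omega
  · intro hC
    ext i l
    rw [nilpotentJordanBlock_mul_apply, zero_apply]
    split_ifs
    · exact hC _ (by simp [Fin.ext_iff]) l
    · rfl

theorem mul_nilpotentJordanBlock_eq_zero_iff [Fintype n] (hd : 0 < d) (C : Matrix n (Fin d) R) :
    C * nilpotentJordanBlock R d = 0 ↔ ∀ k, ∀ l ≠ (⟨d - 1, by omega⟩ : Fin d), C k l = 0 := by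
  constructor
  · intro hC k l hl
    have hl' : (l : ℕ) + 1 < d := by
      have := l.isLt
      have : (l : ℕ) ≠ d - 1 := fun h => hl (Fin.ext h)
      omega
    have hentry := congr_fun₂ hC k ⟨l + 1, hl'⟩
    rw [mul_nilpotentJordanBlock_apply, dif_pos (by simp), zero_apply] at hentry
    simpa using hentry
  · intro hC
    ext k j
    rw [mul_nilpotentJordanBlock_apply, zero_apply]
    split_ifs
    · exact hC k _ (by simp [Fin.ext_iff]; omega)
    · rfl

end JordanBlock

end Matrix

/-- For `n ≥ 3`, the upper triangular matrices orthogonal to `Â = I - E₁₁` are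
exactly the scalar multiples of `E₁₁`, and those orthogonal to the nilpotent
Jordan block `B̂ = Jₙ` are exactly the scalar multiples of `E₁ₙ`. -/
theorem stmt_10 {F : Type*} [Field F] {n : ℕ} (hn : 3 ≤ n) :
    (∀ C : Matrix (Fin n) (Fin n) F, C.BlockTriangular id →
      (((1 - Matrix.single (⟨0, by omega⟩ : Fin n) (⟨0, by omega⟩ : Fin n) (1 : F)) * C = 0 ∧
        C * (1 - Matrix.single (⟨0, by omega⟩ : Fin n) (⟨0, by omega⟩ : Fin n) (1 : F)) = 0) ↔
        ∃ α : F, C = α • Matrix.single (⟨0, by omega⟩ : Fin n) (⟨0, by omega⟩ : Fin n) (1 : F))) ∧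
    (∀ C : Matrix (Fin n) (Fin n) F, C.BlockTriangular id →
      (((Matrix.of fun i j : Fin n => if (i : ℕ) + 1 = (j : ℕ) then (1 : F) else 0) * C = 0 ∧
        C * (Matrix.of fun i j : Fin n => if (i : ℕ) + 1 = (j : ℕ) then (1 : F) else 0) = 0) ↔
        ∃ α : F, C = α • Matrix.single (⟨0, by omega⟩ : Fin n) (⟨n - 1, by omega⟩ : Fin n) (1 : F))) := by
  have hn0 : 0 < n := by omega
  refine ⟨fun C _ => ?_, fun C _ => ?_⟩
  · rw [one_sub_single_mul_eq_zero_iff, mul_one_sub_single_eq_zero_iff,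
      exists_eq_smul_single_one_iff]
  · exact ((nilpotentJordanBlock_mul_eq_zero_iff hn0 C).and
      (mul_nilpotentJordanBlock_eq_zero_iff hn0 C)).trans (exists_eq_smul_single_one_iff _ _ _).symm
end

section
/- The orthogonality graph O(T_2(F)) is disconnected for every field F: for instance, E_{12} and E_{11} lie in different connected components. -/
/-!
Every vertex `X` of `O(T₂)` with zero diagonal is `a E₁₂` with `a ≠ 0`, and the `(1,2)` entries
of `X Y = 0` and `Y X = 0` read `a Y₂₂ = 0` and `Y₁₁ a = 0`. So the vertices with zero diagonal
form a union of connected components, which contains `E₁₂` but not `E₁₁`.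
-/

open Matrix

theorem SimpleGraph.Reachable.of_forall_adj_imp {V : Type*} {G : SimpleGraph V} {p : V → Prop}
    (hp : ∀ ⦃u v⦄, G.Adj u v → p u → p v) {u v : V} (huv : G.Reachable u v) (hu : p u) :
    p v := by
  rw [SimpleGraph.reachable_iff_reflTransGen] at huv
  induction huv with
  | refl => exact hu
  | tail _ hadj ih => exact hp hadj ih

namespace Matrix

variable {R : Type*}

theorem det_single_fin_two [CommRing R] (i j : Fin 2) (c : R) : (single i j c).det = 0 := by
  fin_cases i <;> fin_cases j <;> simp [det_fin_two]

theorem apply_zero_one_ne_zero_of_diag_eq_zero [Zero R] {A : Matrix (Fin 2) (Fin 2) R}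
    (hA : A.BlockTriangular id) (hA0 : A ≠ 0) (hdiag : A.diag = 0) : A 0 1 ≠ 0 := by
  intro h01
  refine hA0 (ext fun i j => ?_)
  fin_cases i <;> fin_cases j
  · exact congrFun hdiag 0
  · exact h01
  · exact hA (by decide)
  · exact congrFun hdiag 1

theorem diag_eq_zero_of_mul_eq_zero_of_mul_eq_zero [Ring R] [NoZeroDivisors R]
    {A B : Matrix (Fin 2) (Fin 2) R} (hdiag : A.diag = 0) (h01 : A 0 1 ≠ 0)
    (hAB : A * B = 0) (hBA : B * A = 0) : B.diag = 0 := by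
  have hA00 : A 0 0 = 0 := congrFun hdiag 0
  have hA11 : A 1 1 = 0 := congrFun hdiag 1
  have hB11 : A 0 1 * B 1 1 = 0 := by
    simpa only [mul_apply, Fin.sum_univ_two, hA00, zero_mul, zero_add, zero_apply]
      using congrFun (congrFun hAB 0) 1
  have hB00 : B 0 0 * A 0 1 = 0 := by
    simpa only [mul_apply, Fin.sum_univ_two, hA11, mul_zero, add_zero, zero_apply]
      using congrFun (congrFun hBA 0) 1
  ext i
  fin_cases i
  · exact (mul_eq_zero.1 hB00).resolve_right h01
  · exact (mul_eq_zero.1 hB11).resolve_left h01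

end Matrix

theorem orthoGraph_two_diag_eq_zero_of_reachable {F : Type*} [Field F]
    {X Y : {A : Matrix (Fin 2) (Fin 2) F // A.BlockTriangular id ∧ A ≠ 0 ∧ A.det = 0}}
    (h : (orthoGraph F 2).Reachable X Y) (hX : X.1.diag = 0) : Y.1.diag = 0 := by
  refine h.of_forall_adj_imp (p := fun Z => Z.1.diag = 0) (fun Z W hZW hZ => ?_) hX
  exact diag_eq_zero_of_mul_eq_zero_of_mul_eq_zero hZ
    (apply_zero_one_ne_zero_of_diag_eq_zero Z.2.1 Z.2.2.1 hZ) hZW.2.1 hZW.2.2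

theorem single_isOrthoGraphVertex_two {F : Type*} [Field F] {i j : Fin 2} (hij : i ≤ j)
    {c : F} (hc : c ≠ 0) :
    (single i j c).BlockTriangular id ∧ single i j c ≠ 0 ∧ (single i j c).det = 0 :=
  ⟨blockTriangular_single hij c, fun h => hc (by simpa using congrFun (congrFun h i) j),
    det_single_fin_two i j c⟩

/-- `O(T₂)` is disconnected for every field `F`; in particular `E₁₂` and `E₁₁`
lie in different connected components. -/
theorem stmt_16 {F : Type*} [Field F] :
    ¬ (orthoGraph F 2).Connected ∧
    ∀ X Y : {A : Matrix (Fin 2) (Fin 2) F // A.BlockTriangular id ∧ A ≠ 0 ∧ A.det = 0},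
      X.1 = single (0 : Fin 2) (1 : Fin 2) (1 : F) →
      Y.1 = single (0 : Fin 2) (0 : Fin 2) (1 : F) →
      ¬ (orthoGraph F 2).Reachable X Y := by
  have separated :
      ∀ X Y : {A : Matrix (Fin 2) (Fin 2) F // A.BlockTriangular id ∧ A ≠ 0 ∧ A.det = 0},
      X.1 = single 0 1 1 → Y.1 = single 0 0 1 → ¬ (orthoGraph F 2).Reachable X Y := by
    intro X Y hX hY hXY
    have hXdiag : X.1.diag = 0 := by ext i; fin_cases i <;> simp [hX]
    have hYdiag := orthoGraph_two_diag_eq_zero_of_reachable hXY hXdiag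
    simpa [hY] using congrFun hYdiag 0
  refine ⟨fun hconn => ?_, separated⟩
  exact separated ⟨_, single_isOrthoGraphVertex_two (by decide) one_ne_zero⟩
    ⟨_, single_isOrthoGraphVertex_two le_rfl one_ne_zero⟩ rfl rfl (hconn.preconnected _ _)
end
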